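/- arXiv:1908.02102 — 2 statements merged into one kernel-verified Lean document; each statement's English description precedes it below -/
import Mathlib

section
/- Let m ≥ 93 be an integer. Then every positive integer n can be written as ∑_{i=1}^{5} P_m(x_i) + 6·∑_{j=1}^{⌈(m-3)/6⌉ - 1} P_m(y_j) with x_i, y_j ∈ ℤ, and the form ∑_{i=1}^{5} P_m(x_i) + 6·∑_{j=1}^{⌈(m-3)/6⌉ - 2} P_m(y_j) is not universal. Equivalently, ℓ_{m,6,5} = ⌈(m-3)/6⌉ + 4. -/
/-!
Write `P_m(x) = (m - 2) T(x) + x` with `T(x) = x(x - 1)/2`, so that a sum of values of `P_m`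
is `(m - 2) B + F`, where `B` is the sum of the `T(xᵢ)` and `F` the sum of the `xᵢ`.
A balanced pair `s + w, s - w` with `s ∈ {0, 1}` contributes `w²` to `B` and `2s` to `F`;
by Lagrange's four-square theorem, `K ≥ 9` variables therefore reach every `B ≥ 0` together with
every `F ∈ [0, K]`. Five variables reach every small pair `B ≤ 6`, `-1 ≤ F ≤ 5` (a finite
check), and since `m - 2 ≤ 6K + 7`, every `n` is `(m - 2)(β + 6G) + (t + 6Z)` with `(β, t)` such
a pair and `Z ≤ K`.
Conversely `P_m(x) ≥ m - 3` unless `x ∈ {0, 1}`, so `m - 4` would be a sum of at most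
`5 + 6(K - 1) < m - 4` values `0` or `1`.
-/

/-- The `x`-th generalized `m`-gonal number `P_m(x) = ((m-2)x² - (m-4)x)/2`. -/
def polygonal (m : ℕ) (x : ℤ) : ℤ := (((m : ℤ) - 2) * x ^ 2 - ((m : ℤ) - 4) * x) / 2

def tri (x : ℤ) : ℤ := x * (x - 1) / 2

theorem two_mul_tri (x : ℤ) : 2 * tri x = x * (x - 1) :=
  Int.mul_ediv_cancel' (Int.even_mul_pred_self x).two_dvd

theorem polygonal_eq_mul_tri_add (m : ℕ) (x : ℤ) :
    polygonal m x = ((m : ℤ) - 2) * tri x + x := by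
  rw [polygonal, show ((m : ℤ) - 2) * x ^ 2 - ((m : ℤ) - 4) * x
      = 2 * (((m : ℤ) - 2) * tri x + x) by linear_combination (2 - (m : ℤ)) * two_mul_tri x]
  exact Int.mul_ediv_cancel_left _ two_ne_zero

theorem tri_add_add_tri_sub (s w : ℤ) : tri (s + w) + tri (s - w) = w ^ 2 + 2 * tri s := by
  have h : 2 * (tri (s + w) + tri (s - w)) = 2 * (w ^ 2 + 2 * tri s) := by
    linear_combination two_mul_tri (s + w) + two_mul_tri (s - w) - 2 * two_mul_tri s
  linarith

theorem tri_nonneg (x : ℤ) : 0 ≤ tri x := by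
  have := two_mul_tri x
  rcases le_or_gt x 0 with h | h <;> nlinarith

theorem neg_le_tri (x : ℤ) : -x ≤ tri x := by
  have := two_mul_tri x
  rcases le_or_gt x (-1) with h | h <;> nlinarith

theorem mul_tri_le_polygonal (m : ℕ) (x : ℤ) : ((m : ℤ) - 3) * tri x ≤ polygonal m x := by
  rw [polygonal_eq_mul_tri_add]
  linarith [neg_le_tri x]

theorem polygonal_nonneg {m : ℕ} (hm : 3 ≤ m) (x : ℤ) : 0 ≤ polygonal m x := by
  have hm' : (3 : ℤ) ≤ m := by exact_mod_cast hm
  nlinarith [mul_tri_le_polygonal m x, tri_nonneg x]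

theorem polygonal_le_one_of_lt {m : ℕ} (hm : 3 ≤ m) {x : ℤ} (hx : polygonal m x < m - 3) :
    polygonal m x ≤ 1 := by
  have hm' : (3 : ℤ) ≤ m := by exact_mod_cast hm
  rcases (tri_nonneg x).eq_or_lt with h | h
  · have : x * (x - 1) = 0 := by rw [← two_mul_tri, ← h, mul_zero]
    rcases mul_eq_zero.mp this with rfl | h1
    · simp [polygonal]
    · obtain rfl : x = 1 := by linarith
      simp [polygonal]
  · nlinarith [mul_tri_le_polygonal m x]

open Finset in
theorem sum_polygonal_le_card {m N : ℕ} (hm : 3 ≤ m) (x : Fin N → ℤ)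
    (h : ∑ i, polygonal m (x i) < m - 3) : ∑ i, polygonal m (x i) ≤ N :=
  calc ∑ i, polygonal m (x i) ≤ ∑ _i : Fin N, (1 : ℤ) := sum_le_sum fun i _ =>
        polygonal_le_one_of_lt hm <|
          (single_le_sum (fun j _ => polygonal_nonneg hm (x j)) (mem_univ i)).trans_lt h
    _ = N := by simp

theorem sum_add_mul_sum_ne_sub_four {m N₁ N₂ : ℕ} (hm : 3 ≤ m) (r : ℕ)
    (x : Fin N₁ → ℤ) (y : Fin N₂ → ℤ) (hN : N₁ + r * N₂ + 4 < m) :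
    ∑ i, polygonal m (x i) + r * ∑ j, polygonal m (y j) ≠ (m : ℤ) - 4 := by
  intro h
  have hx₀ := Finset.sum_nonneg fun i (_ : i ∈ Finset.univ) => polygonal_nonneg hm (x i)
  have hy₀ := Finset.sum_nonneg fun j (_ : j ∈ Finset.univ) => polygonal_nonneg hm (y j)
  have hN' : (N₁ : ℤ) + r * N₂ + 4 < m := by exact_mod_cast hN
  have hx : ∑ i, polygonal m (x i) ≤ N₁ :=
    sum_polygonal_le_card hm x (by nlinarith [Int.natCast_nonneg r])
  have hy : r * ∑ j, polygonal m (y j) ≤ r * N₂ := by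
    rcases r.eq_zero_or_pos with rfl | hr
    · simp
    · have hr' : (1 : ℤ) ≤ r := by exact_mod_cast hr
      exact mul_le_mul_of_nonneg_left (sum_polygonal_le_card hm y (by nlinarith))
        (by positivity)
  linarith

def triSum (L : List ℤ) : ℤ := (L.map tri).sum

@[simp]
theorem triSum_append (L M : List ℤ) : triSum (L ++ M) = triSum L + triSum M := by
  simp [triSum]

@[simp]
theorem triSum_replicate_one (n : ℕ) : triSum (List.replicate n 1) = 0 := by
  simp [triSum, tri]

theorem sum_map_polygonal (m : ℕ) (L : List ℤ) :
    (L.map (polygonal m)).sum = ((m : ℤ) - 2) * triSum L + L.sum := by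
  simp only [triSum, funext (polygonal_eq_mul_tri_add m), List.sum_map_add, List.sum_map_mul_left,
    List.map_id']

theorem exists_sum_polygonal_eq_sum_map (m : ℕ) {N : ℕ} (L : List ℤ) (hL : L.length ≤ N) :
    ∃ x : Fin N → ℤ, ∑ i, polygonal m (x i) = (L.map (polygonal m)).sum := by
  induction L generalizing N with
  | nil => exact ⟨0, by simp [polygonal]⟩
  | cons a L ih =>
    cases N with
    | zero => simp at hL
    | succ N =>
      obtain ⟨x, hx⟩ := ih (N := N) (by simpa using hL)
      exact ⟨Fin.cons a x, by simp [Fin.sum_univ_succ, hx]⟩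

theorem exists_sum_add_mul_sum_eq_of_lists (m : ℕ) {N₁ N₂ : ℕ} (r : ℤ) {Lx Ly : List ℤ}
    (hx : Lx.length ≤ N₁) (hy : Ly.length ≤ N₂) :
    ∃ (x : Fin N₁ → ℤ) (y : Fin N₂ → ℤ),
      ∑ i, polygonal m (x i) + r * ∑ j, polygonal m (y j) =
        ((m : ℤ) - 2) * (triSum Lx + r * triSum Ly) + (Lx.sum + r * Ly.sum) := by
  obtain ⟨x, hx⟩ := exists_sum_polygonal_eq_sum_map m Lx hx
  obtain ⟨y, hy⟩ := exists_sum_polygonal_eq_sum_map m Ly hy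
  exact ⟨x, y, by rw [hx, hy, sum_map_polygonal, sum_map_polygonal]; ring⟩

def balancedPairs (s : ℤ) (ws : List ℤ) : List ℤ := ws.flatMap fun w => [s + w, s - w]

section balancedPairs

variable (s : ℤ) (ws : List ℤ)

@[simp]
theorem length_balancedPairs : (balancedPairs s ws).length = 2 * ws.length := by
  simp [balancedPairs, mul_comm]

@[simp]
theorem sum_balancedPairs : (balancedPairs s ws).sum = 2 * s * ws.length := by
  induction ws with
  | nil => simp [balancedPairs]
  | cons w ws ih =>
    rw [balancedPairs, List.flatMap_cons, List.sum_append, ← balancedPairs, ih]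
    simp only [List.sum_cons, List.sum_nil, List.length_cons]
    push_cast
    ring

theorem triSum_balancedPairs (hs : tri s = 0) :
    triSum (balancedPairs s ws) = (ws.map (· ^ 2)).sum := by
  induction ws with
  | nil => rfl
  | cons w ws ih =>
    rw [balancedPairs, List.flatMap_cons, ← balancedPairs, triSum_append, ih]
    simp [triSum, tri_add_add_tri_sub, hs]

end balancedPairs

theorem exists_list_triSum_sum_of_le {K : ℕ} (hK : 9 ≤ K) (G : ℕ) {Z : ℕ} (hZ : Z ≤ K) :
    ∃ L : List ℤ, L.length ≤ K ∧ triSum L = G ∧ L.sum = Z := by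
  obtain ⟨a, b, c, d, hG⟩ := Nat.sum_four_squares G
  let ws : List ℤ := [a, b, c, d]
  let k := min (Z / 2) 4
  have hk : (ws.take k).length = k := by simp [ws, k]
  refine ⟨balancedPairs 1 (ws.take k) ++ balancedPairs 0 (ws.drop k) ++
    List.replicate (Z - 2 * k) 1, ?_, ?_, ?_⟩
  · simp only [List.length_append, length_balancedPairs, List.length_replicate, hk,
      List.length_drop]
    simp only [ws, List.length_cons, List.length_nil]
    omega
  · rw [triSum_append, triSum_append, triSum_balancedPairs _ _ (by decide),
      triSum_balancedPairs _ _ (by decide), triSum_replicate_one, ← List.sum_append,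
      ← List.map_append, List.take_append_drop]
    simp only [ws, ← hG, List.map_cons, List.map_nil, List.sum_cons, List.sum_nil, Nat.cast_add,
      Nat.cast_pow]
    ring
  · simp only [List.sum_append, sum_balancedPairs, hk, List.sum_replicate, nsmul_eq_mul, mul_one]
    push_cast
    omega

theorem exists_list_triSum_sum_of_small {β : ℕ} {t : ℤ} (hβ : β ≤ 6) (ht : -1 ≤ t)
    (ht' : t ≤ 5) (hβt : β = 0 → 0 ≤ t) :
    ∃ L : List ℤ, L.length ≤ 5 ∧ triSum L = β ∧ L.sum = t := by
  have table : ∀ b ∈ Finset.range 7, ∀ f ∈ Finset.Icc (-1 : ℤ) 5, (b = 0 → 0 ≤ f) →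
      ∃ u ∈ Finset.Icc (-3 : ℤ) 4, ∃ v ∈ Finset.Icc (-3 : ℤ) 4, ∃ w ∈ Finset.Icc (-3 : ℤ) 4,
        tri u + tri v + tri w = b ∧ u + v + w ≤ f ∧ f ≤ u + v + w + 2 := by
    decide
  obtain ⟨u, -, v, -, w, -, hB, hF, hF'⟩ :=
    table β (Finset.mem_range.2 (by omega)) t (Finset.mem_Icc.2 ⟨ht, ht'⟩) hβt
  refine ⟨[u, v, w] ++ List.replicate (t - (u + v + w)).toNat 1, ?_, ?_, ?_⟩
  · simp only [List.length_append, List.length_cons, List.length_nil, List.length_replicate]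
    omega
  · rw [triSum_append, triSum_replicate_one]
    simp [triSum, ← hB, add_assoc]
  · simp only [List.sum_append, List.sum_cons, List.sum_nil, List.sum_replicate, nsmul_eq_mul,
      mul_one]
    omega

theorem exists_sum_add_six_mul_sum_eq_of_le {m K : ℕ} (hK : 9 ≤ K) (β G : ℕ) (t : ℤ) (Z : ℕ)
    (hβ : β ≤ 6) (ht : -1 ≤ t) (ht' : t ≤ 5) (hβt : β = 0 → 0 ≤ t) (hZ : Z ≤ K) :
    ∃ (x : Fin 5 → ℤ) (y : Fin K → ℤ), ∑ i, polygonal m (x i) + 6 * ∑ j, polygonal m (y j) =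
      ((m : ℤ) - 2) * (β + 6 * G) + (t + 6 * Z) := by
  obtain ⟨Lx, hx, hBx, hFx⟩ := exists_list_triSum_sum_of_small hβ ht ht' hβt
  obtain ⟨Ly, hy, hBy, hFy⟩ := exists_list_triSum_sum_of_le hK G hZ
  obtain ⟨x, y, h⟩ := exists_sum_add_mul_sum_eq_of_lists m 6 hx hy
  exact ⟨x, y, by rw [h, hBx, hFx, hBy, hFy]⟩

theorem exists_sum_add_six_mul_sum_eq {m K : ℕ} (hm : 3 ≤ m) (hK : 9 ≤ K)
    (hmK : m ≤ 6 * K + 9) (n : ℕ) : ∃ (x : Fin 5 → ℤ) (y : Fin K → ℤ),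
      ∑ i, polygonal m (x i) + 6 * ∑ j, polygonal m (y j) = n := by
  have hm₂ : ((m - 2 : ℕ) : ℤ) = m - 2 := by omega
  obtain ⟨A, R, hn, hR⟩ : ∃ A R : ℕ, (n : ℤ) = ((m : ℤ) - 2) * A + R ∧ R < m - 2 :=
    ⟨n / (m - 2), n % (m - 2), by rw [← hm₂]; exact_mod_cast (Nat.div_add_mod n (m - 2)).symm,
      Nat.mod_lt _ (by omega)⟩
  have hA : (A : ℤ) % 6 + 6 * ((A : ℤ) / 6) = A := Int.emod_add_mul_ediv _ _
  rcases lt_or_ge R (6 * K + 6) with hR' | hR'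
  · obtain ⟨x, y, h⟩ := exists_sum_add_six_mul_sum_eq_of_le (m := m) hK (A % 6) (A / 6) (R % 6)
      (R / 6) (by omega) (by omega) (by omega) (by omega) (by omega)
    have hR : (R : ℤ) % 6 + 6 * ((R : ℤ) / 6) = R := Int.emod_add_mul_ediv _ _
    refine ⟨x, y, h.trans ?_⟩
    push_cast
    linear_combination ((m : ℤ) - 2) * hA + hR - hn
  · -- here `R = m - 3`, i.e. `n = (m - 2) (A + 1) - 1`
    obtain ⟨x, y, h⟩ := exists_sum_add_six_mul_sum_eq_of_le (m := m) hK (A % 6 + 1) (A / 6) (-1)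
      0 (by omega) le_rfl (by omega) (by omega) (by omega)
    have hR : (R : ℤ) = m - 3 := by omega
    refine ⟨x, y, h.trans ?_⟩
    push_cast
    linear_combination ((m : ℤ) - 2) * hA - hR - hn

theorem ell_m_six_five (m : ℕ) (hm : 93 ≤ m) :
    (∀ n : ℕ, 0 < n →
        ∃ (x : Fin 5 → ℤ) (y : Fin ((m - 3 + 5) / 6 - 1) → ℤ),
          ∑ i, polygonal m (x i) + 6 * ∑ j, polygonal m (y j) = (n : ℤ)) ∧
      ¬ ∀ n : ℕ, 0 < n →
          ∃ (x : Fin 5 → ℤ) (y : Fin ((m - 3 + 5) / 6 - 2) → ℤ),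
            ∑ i, polygonal m (x i) + 6 * ∑ j, polygonal m (y j) = (n : ℤ) := by
  refine ⟨fun n _ => exists_sum_add_six_mul_sum_eq (by omega) (by omega) (by omega) n,
    fun h => ?_⟩
  obtain ⟨x, y, hxy⟩ := h (m - 4) (by omega)
  exact sum_add_mul_sum_ne_sub_four (m := m) (by omega) 6 x y (by omega) (by push_cast; omega)
end

section
/- Let m ≥ 14 be an integer with m ≡ 2 (mod 3). Then there exist nonnegative integers ℓ1 and ℓ2 such that the form F(x,y) = ∑_{i=1}^{ℓ1} P_m(x_i) + 3·∑_{j=1}^{ℓ2} P_m(y_j) represents every positive integer n ≤ 2m - 10 but is not universal. (This shows that the minimal universality-testing constant γ_m satisfies γ_m ≥ 2m - 9.) -/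
lemma poly_double (m : ℕ) (x : ℤ) :
    2 * polygonal m x = ((m : ℤ) - 2) * x ^ 2 - ((m : ℤ) - 4) * x := by
  have hdvd : (2 : ℤ) ∣ (((m : ℤ) - 2) * x ^ 2 - ((m : ℤ) - 4) * x) := by
    have he : Even ((x - 1) * x) := by
      simpa using Int.even_mul_succ_self (x - 1)
    obtain ⟨k, hk⟩ := he
    exact ⟨((m : ℤ) - 4) * k + x ^ 2, by nlinarith [hk]⟩
  rw [polygonal, mul_comm]
  exact Int.ediv_mul_cancel hdvd

lemma poly_zero (m : ℕ) : polygonal m 0 = 0 := by simp [polygonal]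

lemma poly_one (m : ℕ) : polygonal m 1 = 1 := by
  rw [polygonal, show ((m : ℤ) - 2) * 1 ^ 2 - ((m : ℤ) - 4) * 1 = 1 * 2 by ring]
  simp

lemma poly_neg_one (m : ℕ) : polygonal m (-1) = (m : ℤ) - 3 := by
  rw [polygonal, show ((m : ℤ) - 2) * (-1) ^ 2 - ((m : ℤ) - 4) * (-1) = ((m : ℤ) - 3) * 2 by ring]
  simp

lemma poly_two_val (m : ℕ) : polygonal m 2 = (m : ℤ) := by
  rw [polygonal, show ((m : ℤ) - 2) * 2 ^ 2 - ((m : ℤ) - 4) * 2 = (m : ℤ) * 2 by ring]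
  simp

lemma poly_nonneg (m : ℕ) (hm : 4 ≤ m) (x : ℤ) : 0 ≤ polygonal m x := by
  have h2 := poly_double m x
  have hm' : (4 : ℤ) ≤ (m : ℤ) := by exact_mod_cast hm
  have hxx : x ≤ x ^ 2 := by
    rcases le_or_gt 1 x with h | h
    · nlinarith
    · nlinarith [sq_nonneg x]
  nlinarith [sq_nonneg x]

lemma poly_cases (m : ℕ) (hm : 14 ≤ m) (x : ℤ) (h : polygonal m x ≤ 2 * (m : ℤ) - 9) :
    polygonal m x = 0 ∨ polygonal m x = 1 ∨ polygonal m x = (m : ℤ) - 3 ∨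
      polygonal m x = (m : ℤ) := by
  have h2 := poly_double m x
  have hm' : (14 : ℤ) ≤ (m : ℤ) := by exact_mod_cast hm
  have hx1 : -1 ≤ x := by
    by_contra hc
    push_neg at hc
    have hc' : x ≤ -2 := by omega
    nlinarith [mul_nonneg (show (0:ℤ) ≤ (m:ℤ) - 2 by linarith) (sq_nonneg (x + 2)),
      mul_nonneg (show (0:ℤ) ≤ 5 * (m:ℤ) - 12 by linarith) (show (0:ℤ) ≤ -(x+2) by linarith)]
  have hx2 : x ≤ 2 := by
    by_contra hc
    push_neg at hc
    have hc' : 3 ≤ x := by omega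
    nlinarith [mul_nonneg (show (0:ℤ) ≤ (m:ℤ) - 2 by linarith) (sq_nonneg (x - 3)),
      mul_nonneg (show (0:ℤ) ≤ 5 * (m:ℤ) - 12 by linarith) (show (0:ℤ) ≤ x - 3 by linarith)]
  interval_cases x
  · rw [poly_neg_one]; tauto
  · rw [poly_zero]; tauto
  · rw [poly_one]; tauto
  · rw [poly_two_val]; tauto

lemma sum_ones (m : ℕ) : ∀ (ℓ q : ℕ), q ≤ ℓ →
    ∃ y : Fin ℓ → ℤ, ∑ j, polygonal m (y j) = (q : ℤ) := by
  intro ℓ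
  induction ℓ with
  | zero => intro q hq; exact ⟨fun j => 0, by simp; omega⟩
  | succ ℓ ih =>
    intro q hq
    rcases q with _ | q'
    · exact ⟨fun j => 0, by simp [poly_zero]⟩
    · obtain ⟨y', hy'⟩ := ih q' (by omega)
      refine ⟨Fin.cons 1 y', ?_⟩
      rw [Fin.sum_univ_succ]
      simp only [Fin.cons_zero, Fin.cons_succ]
      rw [hy', poly_one]
      push_cast
      ring

theorem gamma_lower_bound_of_two_mod_three (m : ℕ) (hm : 14 ≤ m) (hm3 : m % 3 = 2) :
    ∃ ℓ₁ ℓ₂ : ℕ,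
      (∀ n : ℕ, 0 < n → n ≤ 2 * m - 10 →
          ∃ (x : Fin ℓ₁ → ℤ) (y : Fin ℓ₂ → ℤ),
            ∑ i, polygonal m (x i) + 3 * ∑ j, polygonal m (y j) = (n : ℤ)) ∧
        ¬ ∀ n : ℕ, 0 < n →
            ∃ (x : Fin ℓ₁ → ℤ) (y : Fin ℓ₂ → ℤ),
              ∑ i, polygonal m (x i) + 3 * ∑ j, polygonal m (y j) = (n : ℤ) := by
  obtain ⟨t, hmt, ht4⟩ : ∃ t, m = 3 * t + 2 ∧ 4 ≤ t := ⟨(m - 2) / 3, by omega, by omega⟩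
  refine ⟨2, 2 * t - 3, ?_, ?_⟩
  · -- represents all n ≤ 2m - 10
    intro n hn hn2
    have hn6 : n ≤ 6 * t - 6 := by omega
    have hsum2 : ∀ a b : ℤ, ∑ i, polygonal m (![a, b] i) =
        polygonal m a + polygonal m b := by
      intro a b
      simp [Fin.sum_univ_two]
    by_cases h0 : n % 3 = 0
    · by_cases hbig : n = 6 * t - 6
      · obtain ⟨y, hy⟩ := sum_ones m (2 * t - 3) (t - 2) (by omega)
        refine ⟨![1, -1], y, ?_⟩
        rw [hsum2, hy, poly_one, poly_neg_one]
        omega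
      · obtain ⟨y, hy⟩ := sum_ones m (2 * t - 3) (n / 3) (by omega)
        refine ⟨![0, 0], y, ?_⟩
        rw [hsum2, hy, poly_zero]
        omega
    · by_cases h1 : n % 3 = 1
      · obtain ⟨y, hy⟩ := sum_ones m (2 * t - 3) (n / 3) (by omega)
        refine ⟨![1, 0], y, ?_⟩
        rw [hsum2, hy, poly_one, poly_zero]
        omega
      · have h2' : n % 3 = 2 := by omega
        obtain ⟨y, hy⟩ := sum_ones m (2 * t - 3) (n / 3) (by omega)
        refine ⟨![1, 1], y, ?_⟩
        rw [hsum2, hy, poly_one]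
        omega
  · -- not universal : 2m - 9 is not represented
    intro hall
    obtain ⟨x, y, hxy⟩ := hall (2 * m - 9) (by omega)
    have hm4 : 4 ≤ m := by omega
    set S : ℤ := ∑ j, polygonal m (y j) with hS
    have hS0 : 0 ≤ S := Finset.sum_nonneg fun j _ => poly_nonneg m hm4 _
    have hx2 : ∑ i, polygonal m (x i) = polygonal m (x 0) + polygonal m (x 1) :=
      Fin.sum_univ_two _
    rw [hx2] at hxy
    have hcast : ((2 * m - 9 : ℕ) : ℤ) = 2 * (m : ℤ) - 9 := by omega
    rw [hcast] at hxy
    have ha0 : 0 ≤ polygonal m (x 0) := poly_nonneg m hm4 _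
    have hb0 : 0 ≤ polygonal m (x 1) := poly_nonneg m hm4 _
    have hmZ : (m : ℤ) = 3 * (t : ℤ) + 2 := by omega
    have htZ : (4 : ℤ) ≤ (t : ℤ) := by omega
    have ha := poly_cases m hm (x 0) (by linarith)
    have hb := poly_cases m hm (x 1) (by linarith)
    -- most value combinations are impossible; in the surviving ones S = 2t - 2
    have hSval : S = 2 * (t : ℤ) - 2 := by
      rcases ha with h | h | h | h <;> rcases hb with h' | h' | h' | h' <;> omega
    have hterm : ∀ j, polygonal m (y j) ≤ 1 := by
      intro j
      have h1 : polygonal m (y j) ≤ S :=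
        Finset.single_le_sum (f := fun j => polygonal m (y j))
          (fun i _ => poly_nonneg m hm4 _) (Finset.mem_univ j)
      have h2 := poly_cases m hm (y j) (by omega)
      omega
    have hsum : S ≤ (2 * t - 3 : ℕ) • (1 : ℤ) := by
      have := Finset.sum_le_card_nsmul Finset.univ (fun j => polygonal m (y j)) 1
        (fun j _ => hterm j)
      simpa using this
    rw [nsmul_eq_mul, mul_one] at hsum
    omega
end
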